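/- Let n, m be positive integers. Consider the coefficient matrix A of the standard-form linear system Σ_{j=1}^m f_{ij} = 1 (i = 1,…,n), Σ_{i=1}^n f_{ij} + s_j = ub_j (j = 1,…,m), Σ_{i=1}^n f_{ij} − e_j = lb_j (j = 1,…,m): concretely, A is the integer matrix with rows indexed by Fin n ⊕ Fin m ⊕ Fin m and columns indexed by (Fin n × Fin m) ⊕ Fin m ⊕ Fin m, where the row indexed by i ∈ Fin n has entry 1 in flow column (i', j) iff i' = i and 0 in all slack and excess columns; the row indexed by the first copy of j ∈ Fin m has entry 1 in flow column (i, j') iff j' = j, entry 1 in slack column j' iff j' = j, and 0 in all excess columns; and the row indexed by the second copy of j ∈ Fin m has entry 1 in flow column (i, j') iff j' = j, entry 0 in all slack columns, and entry −1 in excess column j' iff j' = j. Then A is totally unimodular. -/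

import Mathlib

/-!
The flow block is the incidence matrix of the complete bipartite graph between value nodes and
bin nodes, with every bin row taken twice. Bipartite incidence matrices are totally unimodular:
a square submatrix either contains both endpoints of each of its edges, and then the rows of one
side minus the rows of the other sum to zero, or it has a column with at most one nonzero entry,
along which the determinant expands to a smaller minor. Repeating rows and adjoining the signed
unit columns of the slack and excess variables preserves total unimodularity.
-/

open Matrix

lemma Function.Injective.sum_ite_eq_one {ι κ R : Type*} [Fintype ι] [DecidableEq κ]
    [AddCommMonoid R] [One R] {f : ι → κ} (hf : f.Injective) {a : κ} (ha : a ∈ Set.range f) :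
    (∑ i, if f i = a then (1 : R) else 0) = 1 := by
  obtain ⟨i₀, rfl⟩ := ha
  rw [Fintype.sum_eq_single i₀ fun i hi => if_neg (hf.ne hi), if_pos rfl]

namespace Matrix

variable {m n n' R : Type*} [CommRing R]

lemma det_eq_zero_of_vecMul_eq_zero [Fintype n] [DecidableEq n] {M : Matrix n n R}
    {v : n → R} {j : n} (hj : IsUnit (v j)) (hv : v ᵥ* M = 0) : M.det = 0 := by
  have hcomb : ∑ k, v k • M k = 0 := by
    ext i
    simpa [vecMul, dotProduct, Finset.sum_apply] using congr_fun hv i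
  have h := det_updateRow_sum M j v
  rw [hcomb, det_eq_zero_of_row_eq_zero j (by simp), smul_eq_mul, eq_comm] at h
  exact hj.mul_right_eq_zero.mp h

lemma det_succ_column_of_eq_zero {k : ℕ} (M : Matrix (Fin (k + 1)) (Fin (k + 1)) R)
    {i j : Fin (k + 1)} (h : ∀ i' ≠ i, M i' j = 0) :
    M.det = (-1) ^ (i + j : ℕ) * M i j * (M.submatrix i.succAbove j.succAbove).det := by
  rw [det_succ_column M j, Fintype.sum_eq_single i fun i' hi' => by simp [h i' hi']]

lemma isTotallyUnimodular_of_forall_submatrix {A : Matrix m n R}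
    (hA : ∀ i j, A i j ∈ Set.range SignType.cast)
    (hsub : ∀ (k : ℕ) (f : Fin (k + 1) → m) (g : Fin (k + 1) → n), f.Injective →
      g.Injective → (A.submatrix f g).det = 0 ∨ ∃ i j, ∀ i' ≠ i, A (f i') (g j) = 0) :
    A.IsTotallyUnimodular := by
  intro k
  induction k with
  | zero => exact fun _ _ _ _ => ⟨1, by simp⟩
  | succ k ih =>
    intro f g hf hg
    obtain hdet | ⟨i, j, hcol⟩ := hsub k f g hf hg
    · exact ⟨0, by simp [hdet]⟩
    obtain ⟨s, hs⟩ := hA (f i) (g j)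
    obtain ⟨t, ht⟩ := ih (f ∘ i.succAbove) (g ∘ j.succAbove)
      (hf.comp Fin.succAbove_right_injective) (hg.comp Fin.succAbove_right_injective)
    refine ⟨(-1) ^ (i + j : ℕ) * s * t, ?_⟩
    rw [det_succ_column_of_eq_zero _ hcol]
    simp [hs, ht]

lemma IsTotallyUnimodular.fromCols_unitlike [DecidableEq m] {A : Matrix m n R}
    {B : Matrix m n' R} (hA : A.IsTotallyUnimodular)
    (hB : Nonempty m → ∀ j : n', ∃ i : m, ∃ s : SignType, Bᵀ j = Pi.single i s.cast) :
    (fromCols A B).IsTotallyUnimodular := by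
  rw [← transpose_isTotallyUnimodular_iff, transpose_fromCols]
  exact hA.transpose.fromRows_unitlike hB

variable {α β γ : Type*} [DecidableEq α] [DecidableEq β]

/-- The vertex-edge incidence matrix of the bipartite multigraph on `α ⊕ β` whose edge `c : γ`
joins `p c` to `q c`. -/
def bipartiteIncidence (R : Type*) [CommRing R] (p : γ → α) (q : γ → β) :
    Matrix (α ⊕ β) γ R :=
  of fun r c => if r = .inl (p c) ∨ r = .inr (q c) then 1 else 0

lemma det_bipartiteIncidence_submatrix_eq_zero {k : ℕ} (p : γ → α) (q : γ → β)
    {f : Fin (k + 1) → α ⊕ β} (hf : f.Injective) (g : Fin (k + 1) → γ)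
    (hcov : ∀ x, (∃ r, f r = .inl (p (g x))) ∧ (∃ r, f r = .inr (q (g x)))) :
    ((bipartiteIncidence R p q).submatrix f g).det = 0 := by
  set v : Fin (k + 1) → R := fun r => Sum.elim (fun _ => 1) (fun _ => -1) (f r)
  refine det_eq_zero_of_vecMul_eq_zero (v := v) (j := 0) ?_ ?_
  · rcases h : f 0 with _ | _ <;> simp [v, h]
  ext x
  have hterm : ∀ r, v r * bipartiteIncidence R p q (f r) (g x) =
      (if f r = .inl (p (g x)) then 1 else 0) - (if f r = .inr (q (g x)) then 1 else 0) := by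
    intro r
    rcases h : f r with _ | _ <;> simp [v, h, bipartiteIncidence, neg_ite]
  simp only [vecMul, dotProduct, submatrix_apply, hterm, Finset.sum_sub_distrib, Pi.zero_apply,
    hf.sum_ite_eq_one (hcov x).1, hf.sum_ite_eq_one (hcov x).2, sub_self]

lemma bipartiteIncidence_isTotallyUnimodular (p : γ → α) (q : γ → β) :
    (bipartiteIncidence R p q).IsTotallyUnimodular := by
  refine isTotallyUnimodular_of_forall_submatrix (fun r c => ?_) fun k f g hf _ => ?_
  · simp only [bipartiteIncidence, of_apply]
    split_ifs
    exacts [⟨1, by simp⟩, ⟨0, by simp⟩]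
  by_cases hcov : ∀ x, (∃ r, f r = .inl (p (g x))) ∧ (∃ r, f r = .inr (q (g x)))
  · exact .inl (det_bipartiteIncidence_submatrix_eq_zero p q hf g hcov)
  right
  obtain ⟨x, hx⟩ := not_forall.mp hcov
  have hrow : ∃ a, ∀ i, bipartiteIncidence R p q (f i) (g x) ≠ 0 → f i = a := by
    rw [not_and_or, not_exists, not_exists] at hx
    rcases hx with hl | hr
    · refine ⟨.inr (q (g x)), fun i hi => by_contra fun h => ?_⟩
      simp [bipartiteIncidence, hl i, h] at hi
    · refine ⟨.inl (p (g x)), fun i hi => by_contra fun h => ?_⟩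
      simp [bipartiteIncidence, hr i, h] at hi
  obtain ⟨a, ha⟩ := hrow
  by_cases hnz : ∃ i, bipartiteIncidence R p q (f i) (g x) ≠ 0
  · obtain ⟨i, hi⟩ := hnz
    exact ⟨i, x, fun i' hi' => not_not.mp fun h => hi' (hf ((ha i' h).trans (ha i hi).symm))⟩
  · exact ⟨0, x, fun i _ => not_not.mp (not_exists.mp hnz i)⟩

end Matrix

theorem bin_counts_standard_form_matrix_isTotallyUnimodular
    (n m : ℕ) :
    (Matrix.of (fun r : Fin n ⊕ (Fin m ⊕ Fin m) =>
      fun c : (Fin n × Fin m) ⊕ (Fin m ⊕ Fin m) =>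
        match r, c with
        | Sum.inl i, Sum.inl (i', _) => if i' = i then (1 : ℤ) else 0
        | Sum.inl _, Sum.inr _ => 0
        | Sum.inr (Sum.inl j), Sum.inl (_, j') => if j' = j then (1 : ℤ) else 0
        | Sum.inr (Sum.inl j), Sum.inr (Sum.inl j') => if j' = j then (1 : ℤ) else 0
        | Sum.inr (Sum.inl _), Sum.inr (Sum.inr _) => 0
        | Sum.inr (Sum.inr j), Sum.inl (_, j') => if j' = j then (1 : ℤ) else 0
        | Sum.inr (Sum.inr _), Sum.inr (Sum.inl _) => 0
        | Sum.inr (Sum.inr j), Sum.inr (Sum.inr j') => if j' = j then (-1 : ℤ) else 0)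
      ).IsTotallyUnimodular := by
  let slackExcess : Matrix (Fin n ⊕ (Fin m ⊕ Fin m)) (Fin m ⊕ Fin m) ℤ :=
    (of (Sum.elim (fun j => Pi.single (.inr (.inl j)) 1)
      fun j => Pi.single (.inr (.inr j)) (-1)))ᵀ
  have hslackExcess : ∀ c, ∃ r, ∃ s : SignType, slackExcessᵀ c = Pi.single r s.cast := by
    rintro (j | j)
    exacts [⟨.inr (.inl j), 1, rfl⟩, ⟨.inr (.inr j), -1, rfl⟩]
  have hflow := (bipartiteIncidence_isTotallyUnimodular (R := ℤ) (Prod.fst : Fin n × Fin m → _)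
    Prod.snd).submatrix (Sum.map id (Sum.elim id id)) id
  convert hflow.fromCols_unitlike fun _ => hslackExcess using 1
  ext r c
  rcases r with i | j | j <;> rcases c with ⟨i', j'⟩ | j' | j' <;>
    simp [bipartiteIncidence, slackExcess, Pi.single_apply, eq_comm]
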